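/- arXiv:1808.02311 — 4 statements merged into one kernel-verified Lean document; each statement's English description precedes it below -/
import Mathlib

section
/- Let m be a positive integer and p a prime with gcd(p, 2m) = 1, and let D = r^2 - 4mn < 0 be a discriminant with gcd(D, m) = 1. If D = p^2·D₀ for some integer D₀, then there exist integers r₀, n₀ and λ such that D₀ = r₀² - 4m·n₀ and r + 2mλ = p·r₀ and n + rλ + mλ² = p²·n₀. In particular D₀ is a square modulo 4m. -/
/-- If `D = r² - 4mn < 0` is a discriminant prime to `m` and `D = p² D₀` for a
prime `p` with `gcd(p, 2m) = 1`, then after a shift `(n,r) ↦ (n + rλ + mλ², r + 2mλ)`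
one can divide by `p`: there are `r₀, n₀, λ` with `D₀ = r₀² - 4m n₀`,
`r + 2mλ = p r₀` and `n + rλ + mλ² = p² n₀`.  In particular `D₀` is a square mod `4m`. -/
theorem discriminant_divide_by_prime_square (m : ℤ) (hm : 0 < m) (p : ℕ) (hp : p.Prime)
    (hcop : IsCoprime (p : ℤ) (2 * m)) (r n D₀ : ℤ)
    (hneg : r ^ 2 - 4 * m * n < 0)
    (hDm : IsCoprime (r ^ 2 - 4 * m * n) m)
    (hfac : r ^ 2 - 4 * m * n = (p : ℤ) ^ 2 * D₀) :
    ∃ r₀ n₀ lam : ℤ, D₀ = r₀ ^ 2 - 4 * m * n₀ ∧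
      r + 2 * m * lam = (p : ℤ) * r₀ ∧
      n + r * lam + m * lam ^ 2 = (p : ℤ) ^ 2 * n₀ := by
  obtain ⟨u, v, huv⟩ := id hcop
  have hr : r + 2 * m * (-(r * v)) = (p : ℤ) * (r * u) := by
    linear_combination (-r) * huv
  have key : 4 * m * (n + r * (-(r * v)) + m * (-(r * v)) ^ 2)
      = (p : ℤ) ^ 2 * ((r * u) ^ 2 - D₀) := by
    have h2 : (r + 2 * m * (-(r * v))) ^ 2
        - 4 * m * (n + r * (-(r * v)) + m * (-(r * v)) ^ 2) = (p : ℤ) ^ 2 * D₀ := by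
      linear_combination hfac
    rw [hr] at h2
    linear_combination -h2
  have hcop4 : IsCoprime ((p : ℤ) ^ 2) (4 * m) := by
    have h4 : (4 : ℤ) * m = 2 * (2 * m) := by ring
    rw [h4]
    exact (hcop.of_mul_right_left.mul_right hcop).pow_left
  have hdvd : ((p : ℤ) ^ 2) ∣ (n + r * (-(r * v)) + m * (-(r * v)) ^ 2) :=
    hcop4.dvd_of_dvd_mul_left ⟨(r * u) ^ 2 - D₀, by linear_combination key⟩
  obtain ⟨n₀, hn₀⟩ := hdvd
  refine ⟨r * u, n₀, -(r * v), ?_, hr, hn₀⟩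
  have hp0 : ((p : ℤ) ^ 2) ≠ 0 := by
    simpa using pow_ne_zero 2 (Int.natCast_ne_zero.mpr hp.ne_zero)
  have h : (p : ℤ) ^ 2 * D₀ = (p : ℤ) ^ 2 * ((r * u) ^ 2 - 4 * m * n₀) := by
    rw [hn₀] at key; linear_combination key
  exact mul_left_cancel₀ hp0 h
end

section
/- Let p be a prime and N a positive integer. The matrices α_b = [[1, b], [0, p²]] for 0 ≤ b < p², β_h = [[p, h], [0, p]] for 0 < h < p, and σ = [[p², 0], [0, 1]] form a complete set of representatives for the right cosets Γ₀(N²)\{M ∈ M₂(ℤ) : det M = p², N² ∣ M₂₁, gcd of entries of M is a perfect square}, provided p ∤ N. -/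
open Matrix

/-- The gcd of the four entries of an integral 2×2 matrix. -/
def entryGcd (A : Matrix (Fin 2) (Fin 2) ℤ) : ℕ :=
  Nat.gcd (Nat.gcd (A 0 0).natAbs (A 0 1).natAbs) (Nat.gcd (A 1 0).natAbs (A 1 1).natAbs)

/-- The representatives `α_b = [[1,b],[0,p²]]` (`0 ≤ b < p²`),
`β_h = [[p,h],[0,p]]` (`0 < h < p`), `σ = [[p²,0],[0,1]]`. -/
def IsRep (p : ℕ) (R : Matrix (Fin 2) (Fin 2) ℤ) : Prop :=
  (∃ b : ℕ, b < p ^ 2 ∧ R = !![1, (b : ℤ); 0, (p : ℤ) ^ 2]) ∨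
  (∃ h : ℕ, 0 < h ∧ h < p ∧ R = !![(p : ℤ), (h : ℤ); 0, (p : ℤ)]) ∨
  R = !![(p : ℤ) ^ 2, 0; 0, 1]

/-!
Every integral matrix of positive determinant factors as `γ * !![a, b; 0, d]` with
`γ ∈ SL₂(ℤ)`, `0 < a` and `0 ≤ b < d` (Hermite normal form), and the triangular factor is
unique. The square of the entry gcd divides the determinant, so for determinant `p²` a square
entry gcd must be `1`; the Hermite forms of determinant `p²` and entry gcd `1` are exactly
`α_b`, `β_h` and `σ`. Finally `γ` lies in `Γ₀(N²)` automatically, because the lower-left entry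
of `γ * !![a, b; 0, d]` is `γ₁₀ * a` and `a ∣ p²` is coprime to `N²`.
-/

open MatrixGroups

lemma mul_apply_fin_two (γ R : Matrix (Fin 2) (Fin 2) ℤ) (i j : Fin 2) :
    (γ * R) i j = γ i 0 * R 0 j + γ i 1 * R 1 j := by
  rw [mul_apply, Fin.sum_univ_two]

def IsHermiteForm (R : Matrix (Fin 2) (Fin 2) ℤ) : Prop :=
  R 1 0 = 0 ∧ 0 < R 0 0 ∧ 0 ≤ R 0 1 ∧ R 0 1 < R 1 1

open FixedDetMatrices in
lemma exists_eq_mul_isHermiteForm (A : Matrix (Fin 2) (Fin 2) ℤ) (hA : 0 < A.det) :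
    ∃ (γ : SL(2, ℤ)) (R : Matrix (Fin 2) (Fin 2) ℤ), IsHermiteForm R ∧ A = γ * R := by
  let A' : FixedDetMatrix (Fin 2) ℤ A.det := ⟨A, rfl⟩
  change ∃ (γ : SL(2, ℤ)) (R : Matrix (Fin 2) (Fin 2) ℤ), IsHermiteForm R ∧ A'.1 = γ * R
  induction A' using induction_on hA.ne' with
  | h0 B h10 ha hb hbd =>
    refine ⟨1, B.1, ⟨h10, ha, hb, ?_⟩, by simp⟩
    have hdet : B.1 0 0 * B.1 1 1 = A.det := by
      simpa [det_fin_two, h10] using B.2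
    have hd : 0 < B.1 1 1 := pos_of_mul_pos_right (by rwa [hdet]) ha.le
    rwa [abs_of_nonneg hb, abs_of_pos hd] at hbd
  | hS B ih =>
    obtain ⟨γ, R, hR, hB⟩ := ih
    exact ⟨ModularGroup.S * γ, R, hR, by rw [smul_coe, hB, ← mul_assoc]; rfl⟩
  | hT B ih =>
    obtain ⟨γ, R, hR, hB⟩ := ih
    exact ⟨ModularGroup.T * γ, R, hR, by rw [smul_coe, hB, ← mul_assoc]; rfl⟩

namespace IsHermiteForm

variable {R R' : Matrix (Fin 2) (Fin 2) ℤ}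

lemma eq_of_mul_eq {u : Matrix (Fin 2) (Fin 2) ℤ} (hR : IsHermiteForm R)
    (hR' : IsHermiteForm R') (hu : u.det = 1) (h : u * R = R') : R = R' := by
  obtain ⟨h10, ha, hb, hbd⟩ := hR
  obtain ⟨h10', ha', hb', hbd'⟩ := hR'
  have e : ∀ i j, u i 0 * R 0 j + u i 1 * R 1 j = R' i j := fun i j => by
    rw [← mul_apply_fin_two, h]
  have hu10 : u 1 0 = 0 := by
    simpa [h10, h10', ha.ne'] using e 1 0
  have e00 : u 0 0 * R 0 0 = R' 0 0 := by simpa [h10] using e 0 0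
  have hu00 : u 0 0 = 1 :=
    Int.eq_one_of_mul_eq_one_right (pos_of_mul_pos_left (e00 ▸ ha') ha.le).le
      (by simpa [det_fin_two, hu10] using hu)
  have hu11 : u 1 1 = 1 := by simpa [det_fin_two, hu10, hu00] using hu
  have hd : R 1 1 = R' 1 1 := by simpa [hu10, hu11] using e 1 1
  have hb_sub : R' 0 1 - R 0 1 = 0 :=
    Int.eq_zero_of_abs_lt_dvd (m := R 1 1) ⟨u 0 1, by rw [← e 0 1, hu00]; ring⟩
      (abs_lt.2 ⟨by linarith, by linarith⟩)
  have ha_eq : R 0 0 = R' 0 0 := by rw [← e00, hu00, one_mul]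
  rw [eta_fin_two R, eta_fin_two R', ha_eq, sub_eq_zero.1 hb_sub, h10, h10', hd]

lemma eq_of_mul_eq_mul {γ γ' : Matrix (Fin 2) (Fin 2) ℤ} (hR : IsHermiteForm R)
    (hR' : IsHermiteForm R') (hγ : γ.det = 1) (hγ' : γ'.det = 1) (h : γ * R = γ' * R') :
    R = R' :=
  hR.eq_of_mul_eq hR' (u := γ'.adjugate * γ) (by rw [det_mul, det_adjugate, hγ, hγ']; simp)
    (by rw [mul_assoc, h, ← mul_assoc, adjugate_mul, hγ', one_smul, one_mul])

end IsHermiteForm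

lemma dvd_entryGcd_iff {m : ℕ} {A : Matrix (Fin 2) (Fin 2) ℤ} :
    m ∣ entryGcd A ↔ ∀ i j, (m : ℤ) ∣ A i j := by
  simp only [entryGcd, Nat.dvd_gcd_iff, Int.natCast_dvd, Fin.forall_fin_two, and_assoc]

lemma entryGcd_dvd_entryGcd_mul (γ R : Matrix (Fin 2) (Fin 2) ℤ) :
    entryGcd R ∣ entryGcd (γ * R) := by
  have h := dvd_entryGcd_iff.1 (dvd_refl (entryGcd R))
  refine dvd_entryGcd_iff.2 fun i j => ?_
  rw [mul_apply_fin_two]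
  exact dvd_add (dvd_mul_of_dvd_right (h 0 j) _) (dvd_mul_of_dvd_right (h 1 j) _)

lemma sq_entryGcd_dvd_det (A : Matrix (Fin 2) (Fin 2) ℤ) : (entryGcd A : ℤ) ^ 2 ∣ A.det := by
  have h := dvd_entryGcd_iff.1 (dvd_refl (entryGcd A))
  rw [det_fin_two, sq]
  exact dvd_sub (mul_dvd_mul (h 0 0) (h 1 1)) (mul_dvd_mul (h 0 1) (h 1 0))

lemma entryGcd_eq_one_of_isSquare {p : ℕ} (hp : p.Prime) {A : Matrix (Fin 2) (Fin 2) ℤ}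
    (hdet : A.det = (p : ℤ) ^ 2) (hsq : IsSquare (entryGcd A)) : entryGcd A = 1 := by
  have hdvd : entryGcd A ^ 2 ∣ p ^ 2 := by
    exact_mod_cast hdet ▸ sq_entryGcd_dvd_det A
  rcases hp.eq_one_or_self_of_dvd _ ((Nat.pow_dvd_pow_iff two_ne_zero).1 hdvd) with h | h
  · exact h
  · exact absurd (h ▸ hsq) hp.prime.not_isSquare

lemma isRep_of_isHermiteForm {p : ℕ} (hp : p.Prime) {R : Matrix (Fin 2) (Fin 2) ℤ}
    (hR : IsHermiteForm R) (hdet : R.det = (p : ℤ) ^ 2) (hgcd : entryGcd R = 1) : IsRep p R := by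
  obtain ⟨h10, ha, hb, hbd⟩ := hR
  have hR : R = !![R 0 0, R 0 1; 0, R 1 1] := h10 ▸ eta_fin_two R
  rw [det_fin_two, h10, mul_zero, sub_zero] at hdet
  rw [hR] at hgcd ⊢
  clear hR h10
  generalize R 0 0 = a, R 0 1 = b, R 1 1 = d at *
  lift a to ℕ using ha.le
  lift d to ℕ using hb.trans hbd.le
  lift b to ℕ using hb
  norm_cast at ha hbd hdet
  obtain ⟨k, hk, rfl⟩ := (Nat.dvd_prime_pow hp).1 (Dvd.intro d hdet)
  interval_cases k
  · obtain rfl : d = p ^ 2 := by simpa using hdet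
    exact Or.inl ⟨b, hbd, by simp⟩
  · obtain rfl : d = p := by simpa [sq, hp.ne_zero] using hdet
    refine Or.inr (Or.inl ⟨b, Nat.pos_of_ne_zero ?_, hbd, by simp⟩)
    rintro rfl
    exact hp.ne_one (by simpa [entryGcd] using hgcd)
  · obtain rfl : d = 1 := by simpa [hp.ne_zero] using hdet
    obtain rfl : b = 0 := by omega
    exact Or.inr (Or.inr (by simp))

lemma isHermiteForm_of_isRep {p : ℕ} (hp : 0 < p) {R : Matrix (Fin 2) (Fin 2) ℤ}
    (h : IsRep p R) : IsHermiteForm R := by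
  rcases h with ⟨b, hb, rfl⟩ | ⟨h, -, hh, rfl⟩ | rfl <;>
    refine ⟨rfl, ?_, ?_, ?_⟩ <;>
    simp only [of_apply, cons_val', cons_val_zero, cons_val_one, cons_val_fin_one] <;>
    first | positivity | exact_mod_cast hb | exact_mod_cast hh

lemma dvd_apply_one_zero_of_dvd_mul {n : ℤ} {γ R : Matrix (Fin 2) (Fin 2) ℤ} (hR : R 1 0 = 0)
    (hn : IsCoprime n (R 0 0)) (h : n ∣ (γ * R) 1 0) : n ∣ γ 1 0 := by
  rw [mul_apply_fin_two, hR, mul_zero, add_zero] at h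
  exact hn.dvd_of_dvd_mul_right h

theorem hecke_coset_representatives_general (p N : ℕ) (hp : p.Prime)
    (hpN : ¬ p ∣ N) (A : Matrix (Fin 2) (Fin 2) ℤ)
    (hdet : A.det = (p : ℤ) ^ 2) (hA : (N : ℤ) ^ 2 ∣ A 1 0)
    (hgcd : IsSquare (entryGcd A)) :
    ∃! R : Matrix (Fin 2) (Fin 2) ℤ, IsRep p R ∧
      ∃ γ : Matrix (Fin 2) (Fin 2) ℤ, γ.det = 1 ∧ (N : ℤ) ^ 2 ∣ γ 1 0 ∧ A = γ * R := by
  obtain ⟨γ, R, hR, rfl⟩ := exists_eq_mul_isHermiteForm A (hdet ▸ pow_pos (mod_cast hp.pos) 2)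
  have hRdet : R.det = (p : ℤ) ^ 2 := by
    rwa [det_mul, Matrix.SpecialLinearGroup.det_coe, one_mul] at hdet
  have hRgcd : entryGcd R = 1 := Nat.eq_one_of_dvd_one <|
    entryGcd_eq_one_of_isSquare hp hdet hgcd ▸ entryGcd_dvd_entryGcd_mul γ R
  refine ⟨R, ⟨isRep_of_isHermiteForm hp hR hRdet hRgcd, γ, γ.det_coe, ?_, rfl⟩, ?_⟩
  · have hNp : IsCoprime (N : ℤ) p :=
      Nat.isCoprime_iff_coprime.2 (hp.coprime_iff_not_dvd.2 hpN).symm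
    have hR00 : R 0 0 ∣ (p : ℤ) ^ 2 :=
      ⟨R 1 1, by rw [← hRdet, det_fin_two, hR.1, mul_zero, sub_zero]⟩
    exact dvd_apply_one_zero_of_dvd_mul hR.1 (hNp.pow.of_isCoprime_of_dvd_right hR00) hA
  · rintro R' ⟨hR', γ', hγ', -, hA'⟩
    exact (hR.eq_of_mul_eq_mul (isHermiteForm_of_isRep hp.pos hR') γ.det_coe hγ' hA').symm

/-- The matrices `α_b`, `β_h`, `σ` form a complete set of representatives for
`Γ₀(N²)\{M ∈ M₂(ℤ) : det M = p², N² ∣ M₂₁, gcd(M) = □}` when `p ∤ N`: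
every such matrix `A` lies in `Γ₀(N²)·R` for exactly one representative `R`. -/
theorem hecke_coset_representatives (p N : ℕ) (hp : p.Prime) (hN : 0 < N)
    (hpN : ¬ p ∣ N) (A : Matrix (Fin 2) (Fin 2) ℤ)
    (hdet : A.det = (p : ℤ) ^ 2) (hA : (N : ℤ) ^ 2 ∣ A 1 0)
    (hgcd : IsSquare (entryGcd A)) :
    ∃! R : Matrix (Fin 2) (Fin 2) ℤ, IsRep p R ∧
      ∃ γ : Matrix (Fin 2) (Fin 2) ℤ, γ.det = 1 ∧ (N : ℤ) ^ 2 ∣ γ 1 0 ∧ A = γ * R :=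
  hecke_coset_representatives_general p N hp hpN A hdet hA hgcd
end

section
/- Let N, p be positive integers with gcd(p, N) = 1, let α be an integer prime to p and let \overline{N²α} denote an integer inverse of N²α mod p. Then in SL₂(ℝ): [[0, -1/N],[N, 0]]⁻¹ · [[1, α/p],[0, 1]] · [[0, -1/(Np)],[Np, 0]] = [[p, \overline{N²α}],[-N²α, (1 - \overline{N²α}·N²α)/p]] · [[1, -\overline{N²α}/p],[0, 1]], and the first factor on the right lies in SL₂(ℤ) with lower-left entry divisible by N². -/
open Matrix

/-!
Conjugating the translation `[[1, x/p], [0, 1]]` by the Fricke matrices gives the lower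
triangular matrix `[[p, 0], [-N²x, 1/p]]`, and the column operation `[[1, -s/p], [0, 1]]`
brings every matrix `[[p, s], [c, d]]` of determinant one to `[[p, 0], [c, 1/p]]`. Taking
`c = -N²α` and `d = (1 - sN²α)/p`, which is an integer when `s` inverts `N²α` modulo `p`,
gives a matrix of `Γ₀(N²)`.
-/

section FieldMatrices

variable {K : Type*} [Field K]

theorem inv_antidiag_neg_inv {a : K} (ha : a ≠ 0) :
    (!![0, -1 / a; a, 0])⁻¹ = !![0, 1 / a; -a, 0] := by
  apply inv_eq_right_inv
  rw [mul_fin_two, one_fin_two]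
  ext i j
  fin_cases i <;> fin_cases j <;> simp [ha]

theorem fricke_conj_translation {n p : K} (hn : n ≠ 0) (hp : p ≠ 0) (x : K) :
    (!![0, -1 / n; n, 0])⁻¹ * !![1, x / p; 0, 1] * !![0, -1 / (n * p); n * p, 0] =
      !![p, 0; -n ^ 2 * x, 1 / p] := by
  rw [inv_antidiag_neg_inv hn, mul_fin_two, mul_fin_two]
  ext i j
  fin_cases i <;> fin_cases j <;> simp <;> field_simp

theorem mul_translation_eq_of_det_eq_one {p s c d : K} (hp : p ≠ 0) (hdet : p * d - s * c = 1) :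
    !![p, s; c, d] * !![1, -s / p; 0, 1] = !![p, 0; c, 1 / p] := by
  have hd : d = (1 + s * c) / p := by
    field_simp
    linear_combination hdet
  rw [mul_fin_two, hd]
  ext i j
  fin_cases i <;> fin_cases j <;> simp <;> field_simp <;> ring

end FieldMatrices

theorem fricke_twist_matrix_identity_general (N p : ℕ) (hN : 0 < N) (hp : 0 < p)
    (α s : ℤ)
    (hs : (N : ℤ) ^ 2 * α * s ≡ 1 [ZMOD p]) :
    ((!![0, -1 / (N : ℝ); (N : ℝ), 0])⁻¹ * !![1, (α : ℝ) / p; 0, 1] *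
        !![0, -1 / ((N : ℝ) * p); (N : ℝ) * p, 0] =
      !![(p : ℝ), (s : ℝ); -(N : ℝ) ^ 2 * α, (1 - (s : ℝ) * (N : ℝ) ^ 2 * α) / p] *
        !![1, -(s : ℝ) / p; 0, 1]) ∧
    (∃ t : ℤ, 1 - s * (N : ℤ) ^ 2 * α = (p : ℤ) * t ∧
      (p : ℤ) * t - s * (-(N : ℤ) ^ 2 * α) = 1) ∧
    (N : ℤ) ^ 2 ∣ -(N : ℤ) ^ 2 * α := by
  have hN' : (N : ℝ) ≠ 0 := by positivity
  have hp' : (p : ℝ) ≠ 0 := by positivity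
  refine ⟨?_, ?_, ⟨-α, by ring⟩⟩
  · rw [fricke_conj_translation hN' hp',
      mul_translation_eq_of_det_eq_one hp' (by field_simp; ring)]
  · obtain ⟨t, ht⟩ := hs.dvd
    exact ⟨t, by linarith, by linarith⟩

/-- The key matrix computation for the commutation of the Fricke involution with
twisting/projection operators:
`[[0,-1/N],[N,0]]⁻¹ · [[1,α/p],[0,1]] · [[0,-1/(Np)],[Np,0]]
  = [[p, s],[-N²α, (1-sN²α)/p]] · [[1, -s/p],[0,1]]`
where `s` is an inverse of `N²α` mod `p`; and the first factor on the right is in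
`SL₂(ℤ)` with lower-left entry divisible by `N²`. -/
theorem fricke_twist_matrix_identity (N p : ℕ) (hN : 0 < N) (hp : 0 < p)
    (hNp : Nat.Coprime p N) (α s : ℤ) (hα : ¬ (p : ℤ) ∣ α)
    (hs : (N : ℤ) ^ 2 * α * s ≡ 1 [ZMOD p]) :
    ((!![0, -1 / (N : ℝ); (N : ℝ), 0])⁻¹ * !![1, (α : ℝ) / p; 0, 1] *
        !![0, -1 / ((N : ℝ) * p); (N : ℝ) * p, 0] =
      !![(p : ℝ), (s : ℝ); -(N : ℝ) ^ 2 * α, (1 - (s : ℝ) * (N : ℝ) ^ 2 * α) / p] *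
        !![1, -(s : ℝ) / p; 0, 1]) ∧
    (∃ t : ℤ, 1 - s * (N : ℤ) ^ 2 * α = (p : ℤ) * t ∧
      (p : ℤ) * t - s * (-(N : ℤ) ^ 2 * α) = 1) ∧
    (N : ℤ) ^ 2 ∣ -(N : ℤ) ^ 2 * α :=
  fricke_twist_matrix_identity_general N p hN hp α s hs
end

section
/- Let m be a positive integer and D = f²D₀ with D₀ < 0 a fundamental discriminant and f ∈ ℤ. If gcd(D, m) = 1 and D ≡ r² (mod 4m) for some integer r (i.e. D is a square mod 4m), then D₀ is also a square mod 4m; moreover one can choose r₀ with D₀ ≡ r₀² (mod 4m) and r ≡ f·r₀ (mod 2m). -/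
/-- `D` is a fundamental discriminant. -/
def IsFundamentalDiscriminant (D : ℤ) : Prop :=
  (D % 4 = 1 ∧ Squarefree D) ∨
  (D % 4 = 0 ∧ Squarefree (D / 4) ∧ ((D / 4) % 4 = 2 ∨ (D / 4) % 4 = 3))

/-!
Write `D = f²D₀`. If `f` is odd it is invertible modulo `4m`, and `r₀ = f⁻¹r` works. If `f` is
even then `m` is odd and `r` is even; halving `f` and `r` gives `(f/2)²D₀ ≡ (r/2)² (mod m)`, so
`D₀ ≡ ((f/2)⁻¹(r/2))² (mod m)`, while `D₀ ≡ 0, 1 (mod 4)` is a square mod `4` since it is a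
discriminant. The Chinese remainder theorem glues the two square roots.
-/

theorem IsFundamentalDiscriminant.exists_sq_modEq_four {D : ℤ}
    (hD : IsFundamentalDiscriminant D) : ∃ t : ℤ, D ≡ t ^ 2 [ZMOD 4] := by
  rcases hD with ⟨h1, -⟩ | ⟨h0, -⟩
  · exact ⟨1, h1⟩
  · exact ⟨0, h0⟩

theorem Int.exists_modEq_and_modEq_of_isCoprime {a b : ℤ} (hab : IsCoprime a b) (u v : ℤ) :
    ∃ x : ℤ, x ≡ u [ZMOD a] ∧ x ≡ v [ZMOD b] := by
  obtain ⟨c, d, hcd⟩ := hab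
  refine ⟨u * (d * b) + v * (c * a), ?_, ?_⟩
  · exact Int.modEq_iff_dvd.2 ⟨(u - v) * c, by linear_combination -u * hcd⟩
  · exact Int.modEq_iff_dvd.2 ⟨(v - u) * d, by linear_combination -v * hcd⟩

theorem Int.exists_sq_modEq_of_sq_mul_modEq_sq {n f D r : ℤ} (hf : IsCoprime f n)
    (h : f ^ 2 * D ≡ r ^ 2 [ZMOD n]) : ∃ s : ℤ, D ≡ s ^ 2 [ZMOD n] ∧ r ≡ f * s [ZMOD n] := by
  obtain ⟨a, b, hab⟩ := hf
  have hinv : a * f ≡ 1 [ZMOD n] := Int.modEq_iff_dvd.2 ⟨b, by linear_combination -hab⟩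
  refine ⟨a * r, ?_, ?_⟩
  · calc D = 1 ^ 2 * D := by ring
      _ ≡ (a * f) ^ 2 * D [ZMOD n] := ((hinv.pow 2).mul_right D).symm
      _ = a ^ 2 * (f ^ 2 * D) := by ring
      _ ≡ a ^ 2 * r ^ 2 [ZMOD n] := h.mul_left _
      _ = (a * r) ^ 2 := by ring
  · calc r = 1 * r := (one_mul r).symm
      _ ≡ a * f * r [ZMOD n] := (hinv.mul_right r).symm
      _ = f * (a * r) := by ring

section

variable {m D₀ f r : ℤ}

theorem exists_sq_modEq_of_odd (hfm : IsCoprime f m) (hf : Odd f)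
    (hsq : f ^ 2 * D₀ ≡ r ^ 2 [ZMOD 4 * m]) :
    ∃ r₀ : ℤ, D₀ ≡ r₀ ^ 2 [ZMOD 4 * m] ∧ r ≡ f * r₀ [ZMOD 2 * m] := by
  have hf4 : IsCoprime f (2 ^ 2) := (Int.isCoprime_two_right.2 hf).pow_right
  obtain ⟨r₀, hD, hr⟩ := Int.exists_sq_modEq_of_sq_mul_modEq_sq (hf4.mul_right hfm) hsq
  exact ⟨r₀, hD, hr.of_dvd ⟨2, by ring⟩⟩

theorem exists_sq_modEq_of_even (hfm : IsCoprime f m) (hf : Even f)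
    (hD₀ : ∃ t : ℤ, D₀ ≡ t ^ 2 [ZMOD 4]) (hsq : f ^ 2 * D₀ ≡ r ^ 2 [ZMOD 4 * m]) :
    ∃ r₀ : ℤ, D₀ ≡ r₀ ^ 2 [ZMOD 4 * m] ∧ r ≡ f * r₀ [ZMOD 2 * m] := by
  obtain ⟨f₁, rfl⟩ := even_iff_two_dvd.1 hf
  have hm : IsCoprime 4 m := by
    simpa using (hfm.of_isCoprime_of_dvd_left (dvd_mul_right 2 f₁)).pow_left (m := 2)
  have hr : 2 ∣ r := by
    have h2 : 2 ∣ r ^ 2 - (2 * f₁) ^ 2 * D₀ := (Dvd.intro (2 * m) (by ring)).trans hsq.dvd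
    have h2' : (2 : ℤ) ∣ (2 * f₁) ^ 2 * D₀ := Dvd.intro (2 * f₁ ^ 2 * D₀) (by ring)
    exact Int.prime_two.dvd_of_dvd_pow (n := 2) (by simpa using h2.add h2')
  obtain ⟨r₁, rfl⟩ := hr
  have hsq₁ : f₁ ^ 2 * D₀ ≡ r₁ ^ 2 [ZMOD m] :=
    Int.ModEq.mul_left_cancel' (c := 4) four_ne_zero (by convert hsq using 1 <;> ring)
  obtain ⟨s, hDs, hrs⟩ := Int.exists_sq_modEq_of_sq_mul_modEq_sq hfm.of_mul_left_right hsq₁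
  obtain ⟨t, hDt⟩ := hD₀
  obtain ⟨r₀, hr₀t, hr₀s⟩ := Int.exists_modEq_and_modEq_of_isCoprime hm t s
  refine ⟨r₀, ?_, ?_⟩
  · rw [← Int.modEq_and_modEq_iff_modEq_mul (Int.isCoprime_iff_nat_coprime.1 hm)]
    exact ⟨hDt.trans (hr₀t.pow 2).symm, hDs.trans (hr₀s.pow 2).symm⟩
  · calc 2 * r₁ ≡ 2 * (f₁ * s) [ZMOD 2 * m] := hrs.mul_left'
      _ ≡ 2 * (f₁ * r₀) [ZMOD 2 * m] := (hr₀s.mul_left f₁).symm.mul_left'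
      _ = 2 * f₁ * r₀ := by ring

end

theorem fundamental_discriminant_square_mod_general (m : ℤ) (D₀ f : ℤ)
    (hfund : IsFundamentalDiscriminant D₀)
    (hcop : IsCoprime (f ^ 2 * D₀) m) (r : ℤ)
    (hsq : f ^ 2 * D₀ ≡ r ^ 2 [ZMOD 4 * m]) :
    ∃ r₀ : ℤ, D₀ ≡ r₀ ^ 2 [ZMOD 4 * m] ∧ r ≡ f * r₀ [ZMOD 2 * m] := by
  have hfm : IsCoprime f m := (IsCoprime.pow_left_iff two_pos).1 hcop.of_mul_left_left
  rcases f.even_or_odd with hf | hf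
  · exact exists_sq_modEq_of_even hfm hf hfund.exists_sq_modEq_four hsq
  · exact exists_sq_modEq_of_odd hfm hf hsq

/-- If `D = f²D₀` with `D₀ < 0` fundamental, `gcd(D,m) = 1` and `D ≡ r² (mod 4m)`,
then `D₀` is also a square mod `4m`; moreover one can choose `r₀` with
`D₀ ≡ r₀² (mod 4m)` and `r ≡ f·r₀ (mod 2m)`. -/
theorem fundamental_discriminant_square_mod (m : ℤ) (hm : 0 < m) (D₀ f : ℤ)
    (hD₀ : D₀ < 0) (hfund : IsFundamentalDiscriminant D₀)
    (hcop : IsCoprime (f ^ 2 * D₀) m) (r : ℤ)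
    (hsq : f ^ 2 * D₀ ≡ r ^ 2 [ZMOD 4 * m]) :
    ∃ r₀ : ℤ, D₀ ≡ r₀ ^ 2 [ZMOD 4 * m] ∧ r ≡ f * r₀ [ZMOD 2 * m] :=
  fundamental_discriminant_square_mod_general m D₀ f hfund hcop r hsq
end
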